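/- arXiv:1904.05702 — 9 statements merged into one kernel-verified Lean document; each statement's English description precedes it below -/
import Mathlib

section
/- There exist real constants a¹_{ij}, a²_{ij}, b¹_{ij}, b²_{ij} (for integers i,j ≥ 0 with i+j ≤ 3) such that the first-order averaged function f(r) = Σ_{0 ≤ i+j ≤ 3} ∫₀^π (a¹_{ij} r^{i+j} cos^{i+1}θ sin^j θ + b¹_{ij} r^{i+j} cos^i θ sin^{j+1}θ)/(r² cos²θ + 1) dθ + Σ_{0 ≤ i+j ≤ 3} ∫_π^{2π} (a²_{ij} r^{i+j} cos^{i+1}θ sin^j θ + b²_{ij} r^{i+j} cos^i θ sin^{j+1}θ)/(r² cos²θ + 1) dθ is not identically zero on (0,∞) and has at least 6 distinct zeros in (0,∞). -/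
/-!
Only the upper half-plane is perturbed (`a² = b² = 0`). Over `[0, π]` every moment
`∫ cos^p θ sin^q θ / (r² cos² θ + 1) dθ` reduces, through `sin² = 1 - cos²` and
`r² cos² = (r² cos² + 1) - 1`, to `∫ 1 / (r² cos² θ + 1) = π / √(1 + r²)` and
`∫ sin θ / (r² cos² θ + 1) = 2 arctan r / r`. For the coefficients chosen below, `f` is therefore
an explicit combination of `1, r, arctan r / r, r arctan r, r / √(1 + r²), r³ / √(1 + r²)` and
`(1 - 1 / √(1 + r²)) / r`, which alternates in sign at `r = 1/10, 3/10, 1/2, 1, 2, 5, 20`.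
This combination is decreasing in the values of `arctan r` and `1 / √(1 + r²)`, so each sign is
certified by one-sided rational bounds on them: the alternating Taylor bounds of `arctan` (through
`arctan r = π / 2 - arctan r⁻¹` for `r ≥ 2`) and bounds on `π` and on square roots.
The intermediate value theorem then gives six zeros.
-/

open Real Finset Set intervalIntegral

noncomputable def arctanTaylor (n : ℕ) (x : ℝ) : ℝ :=
  ∑ k ∈ range n, (-1) ^ k * x ^ (2 * k + 1) / (2 * k + 1)

theorem hasDerivAt_arctanTaylor (n : ℕ) (x : ℝ) :
    HasDerivAt (arctanTaylor n) (∑ k ∈ range n, (-x ^ 2) ^ k) x := by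
  have h := HasDerivAt.fun_sum (u := range n) fun k _ =>
    ((hasDerivAt_pow (2 * k + 1) x).const_mul ((-1 : ℝ) ^ k)).div_const (2 * k + 1 : ℝ)
  refine h.congr_deriv (Finset.sum_congr rfl fun k _ => ?_)
  rw [Nat.add_sub_cancel, neg_pow (x ^ 2), ← pow_mul]
  push_cast
  field_simp

theorem neg_one_pow_mul_arctan_sub_arctanTaylor_nonneg (n : ℕ) {x : ℝ} (hx : 0 ≤ x) :
    0 ≤ (-1) ^ n * (arctan x - arctanTaylor n x) := by
  set g : ℝ → ℝ := fun y => (-1) ^ n * (arctan y - arctanTaylor n y)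
  have hg : ∀ y, HasDerivAt g ((y ^ 2) ^ n / (1 + y ^ 2)) y := fun y => by
    refine (((hasDerivAt_arctan y).sub (hasDerivAt_arctanTaylor n y)).const_mul _).congr_deriv ?_
    have hgeom := geom_sum_mul_neg (-y ^ 2) n
    have hsign : (-1 : ℝ) ^ n * (-y ^ 2) ^ n = (y ^ 2) ^ n := by
      rw [← mul_pow]; ring_nf
    field_simp
    linear_combination -(-1 : ℝ) ^ n * hgeom + hsign
  have hmono : Monotone g := monotone_of_deriv_nonneg (fun y => (hg y).differentiableAt)
    fun y => (hg y).deriv ▸ by positivity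
  simpa [g, arctanTaylor] using hmono hx

theorem arctanTaylor_le_arctan (n : ℕ) {x : ℝ} (hx : 0 ≤ x) :
    arctanTaylor (2 * n) x ≤ arctan x := by
  have := neg_one_pow_mul_arctan_sub_arctanTaylor_nonneg (2 * n) hx
  rw [pow_mul, neg_one_sq, one_pow, one_mul] at this
  linarith

theorem arctan_le_arctanTaylor (n : ℕ) {x : ℝ} (hx : 0 ≤ x) :
    arctan x ≤ arctanTaylor (2 * n + 1) x := by
  have := neg_one_pow_mul_arctan_sub_arctanTaylor_nonneg (2 * n + 1) hx
  rw [pow_succ, pow_mul, neg_one_sq, one_pow, one_mul] at this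
  linarith

theorem le_arctan_of_arctan_inv_le {x u : ℝ} (hx : 0 < x) (h : arctan x⁻¹ ≤ u) :
    3.141592 / 2 - u ≤ arctan x := by
  linarith [arctan_inv_of_pos hx, pi_gt_d6]

theorem arctan_le_of_le_arctan_inv {x u : ℝ} (hx : 0 < x) (h : u ≤ arctan x⁻¹) :
    arctan x ≤ 3.141593 / 2 - u := by
  linarith [arctan_inv_of_pos hx, pi_lt_d6]

theorem le_inv_sqrt_of_sq_mul_le {s u : ℝ} (hu : 0 < u) (h : s ^ 2 * u ≤ 1) : s ≤ (√u)⁻¹ := by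
  rw [← sqrt_inv]
  exact (le_abs_self s).trans (abs_le_sqrt (by rwa [← one_div, le_div_iff₀ hu]))

theorem inv_sqrt_le_of_one_le_sq_mul {s u : ℝ} (hs : 0 ≤ s) (hu : 0 < u) (h : 1 ≤ s ^ 2 * u) :
    (√u)⁻¹ ≤ s := by
  rw [← sqrt_inv, sqrt_le_left hs]
  exact (inv_le_iff_one_le_mul₀ hu).2 (by linarith)

theorem weight_pos (r θ : ℝ) : 0 < r ^ 2 * cos θ ^ 2 + 1 := by positivity

noncomputable def weightedMoment (r α β : ℝ) (p q : ℕ) : ℝ :=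
  ∫ θ in α..β, cos θ ^ p * sin θ ^ q / (r ^ 2 * cos θ ^ 2 + 1)

theorem intervalIntegrable_weightedMoment (r α β : ℝ) (p q : ℕ) :
    IntervalIntegrable (fun θ => cos θ ^ p * sin θ ^ q / (r ^ 2 * cos θ ^ 2 + 1))
      MeasureTheory.volume α β :=
  (Continuous.div (by fun_prop) (by fun_prop) fun θ => (weight_pos r θ).ne').intervalIntegrable _ _

/-- With `k = √(1 + r²)`, the antiderivative is the continuous branch of
`arctan (tan θ / k) / k`: the jumps of that function at odd multiples of `π / 2` are removed by
writing it as `θ / k` plus `(arctan (tan θ / k) - θ) / k`, and combining the difference of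
arctangents into one. -/
theorem hasDerivAt_inv_weight_primitive (r θ : ℝ) :
    HasDerivAt (fun t => (t + arctan (-(√(1 + r ^ 2) - 1) * sin t * cos t
        / (1 + (√(1 + r ^ 2) - 1) * cos t ^ 2))) / √(1 + r ^ 2))
      (1 / (r ^ 2 * cos θ ^ 2 + 1)) θ := by
  set k := √(1 + r ^ 2)
  have hk2 : k ^ 2 = 1 + r ^ 2 := sq_sqrt (by positivity)
  have hk1 : 1 ≤ k := one_le_sqrt.2 (by nlinarith)
  have hW : 0 < 1 + (k - 1) * cos θ ^ 2 := by positivity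
  have hN : HasDerivAt (fun t => -(k - 1) * sin t * cos t)
      (-(k - 1) * (cos θ ^ 2 - sin θ ^ 2)) θ :=
    (((hasDerivAt_sin θ).const_mul _).mul (hasDerivAt_cos θ)).congr_deriv (by ring)
  have hWd : HasDerivAt (fun t => 1 + (k - 1) * cos t ^ 2)
      ((k - 1) * (2 * cos θ * -sin θ)) θ :=
    ((((hasDerivAt_cos θ).pow 2).const_mul _).const_add 1).congr_deriv (by ring)
  refine (((hasDerivAt_id θ).add ((hasDerivAt_arctan _).comp θ (hN.div hWd hW.ne'))).div_const k
    ).congr_deriv ?_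
  have hsc : sin θ ^ 2 = 1 - cos θ ^ 2 := by rw [sin_sq]
  have hden : 1 + (-(k - 1) * sin θ * cos θ / (1 + (k - 1) * cos θ ^ 2)) ^ 2
      = (r ^ 2 * cos θ ^ 2 + 1) / (1 + (k - 1) * cos θ ^ 2) ^ 2 := by
    field_simp
    linear_combination ((k - 1) ^ 2 * cos θ ^ 2) * hsc + cos θ ^ 2 * hk2
  have hnum : -(k - 1) * (cos θ ^ 2 - sin θ ^ 2) * (1 + (k - 1) * cos θ ^ 2)
      - -(k - 1) * sin θ * cos θ * ((k - 1) * (2 * cos θ * -sin θ))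
      = k - (r ^ 2 * cos θ ^ 2 + 1) := by
    linear_combination ((k - 1) * (1 + (k - 1) * cos θ ^ 2) - 2 * (k - 1) ^ 2 * cos θ ^ 2) * hsc
      - cos θ ^ 2 * hk2
  simp only [Pi.div_apply, hden, hnum]
  generalize 1 + (k - 1) * cos θ ^ 2 = W at hW ⊢
  have := (weight_pos r θ).ne'
  field_simp
  ring

theorem weightedMoment_zero_zero (r : ℝ) : weightedMoment r 0 π 0 0 = π / √(1 + r ^ 2) := by
  rw [weightedMoment, integral_eq_sub_of_hasDerivAt
    (fun θ _ => (hasDerivAt_inv_weight_primitive r θ).congr_deriv (by ring))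
    (intervalIntegrable_weightedMoment r 0 π 0 0)]
  simp

theorem integral_term_eq_weightedMoment (a b r α β : ℝ) (n p q p' q' : ℕ) :
    ∫ θ in α..β, (a * r ^ n * cos θ ^ p * sin θ ^ q + b * r ^ n * cos θ ^ p' * sin θ ^ q')
        / (r ^ 2 * cos θ ^ 2 + 1)
      = a * r ^ n * weightedMoment r α β p q + b * r ^ n * weightedMoment r α β p' q' := by
  rw [weightedMoment, weightedMoment, ← integral_const_mul, ← integral_const_mul,
    ← integral_add ((intervalIntegrable_weightedMoment r α β p q).const_mul _)
      ((intervalIntegrable_weightedMoment r α β p' q').const_mul _)]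
  congr 1 with θ
  ring

theorem weightedMoment_add_two_sin (r α β : ℝ) (p q : ℕ) :
    weightedMoment r α β p (q + 2)
      = weightedMoment r α β p q - weightedMoment r α β (p + 2) q := by
  rw [weightedMoment, weightedMoment, weightedMoment, ← integral_sub
    (intervalIntegrable_weightedMoment r α β p q) (intervalIntegrable_weightedMoment r α β (p + 2) q)]
  congr 1 with θ
  rw [pow_add (sin θ), sin_sq]
  ring

theorem sq_mul_weightedMoment_add_two_cos (r α β : ℝ) (p q : ℕ) :
    r ^ 2 * weightedMoment r α β (p + 2) q
      = (∫ θ in α..β, cos θ ^ p * sin θ ^ q) - weightedMoment r α β p q := by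
  rw [weightedMoment, weightedMoment, ← integral_const_mul, ← integral_sub
    ((by fun_prop : Continuous fun θ => cos θ ^ p * sin θ ^ q).intervalIntegrable α β)
    (intervalIntegrable_weightedMoment r α β p q)]
  congr 1 with θ
  have := (weight_pos r θ).ne'
  field_simp
  ring

theorem weightedMoment_zero_one {r : ℝ} (hr : r ≠ 0) :
    weightedMoment r 0 π 0 1 = 2 * arctan r / r := by
  have hderiv : ∀ θ ∈ uIcc 0 π, HasDerivAt (fun t => -arctan (r * cos t) / r)
      (cos θ ^ 0 * sin θ ^ 1 / (r ^ 2 * cos θ ^ 2 + 1)) θ := fun θ _ => by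
    refine ((((hasDerivAt_arctan _).comp θ ((hasDerivAt_cos θ).const_mul r)).neg).div_const r
      ).congr_deriv ?_
    have := (weight_pos r θ).ne'
    field_simp
    ring
  rw [weightedMoment, integral_eq_sub_of_hasDerivAt hderiv (intervalIntegrable_weightedMoment r 0 π 0 1)]
  simp only [cos_pi, cos_zero, mul_neg, mul_one, arctan_neg]
  ring

noncomputable def averagedFunction (a1 a2 b1 b2 : ℕ → ℕ → ℝ) (r : ℝ) : ℝ :=
  (∑ i ∈ range 4, ∑ j ∈ range (4 - i),
    ∫ θ in 0..π, (a1 i j * r ^ (i + j) * cos θ ^ (i + 1) * sin θ ^ j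
      + b1 i j * r ^ (i + j) * cos θ ^ i * sin θ ^ (j + 1)) / (r ^ 2 * cos θ ^ 2 + 1)) +
  (∑ i ∈ range 4, ∑ j ∈ range (4 - i),
    ∫ θ in π..2 * π, (a2 i j * r ^ (i + j) * cos θ ^ (i + 1) * sin θ ^ j
      + b2 i j * r ^ (i + j) * cos θ ^ i * sin θ ^ (j + 1)) / (r ^ 2 * cos θ ^ 2 + 1))

theorem averagedFunction_eq_sum_weightedMoment (a1 a2 b1 b2 : ℕ → ℕ → ℝ) (r : ℝ) :
    averagedFunction a1 a2 b1 b2 r =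
      (∑ i ∈ range 4, ∑ j ∈ range (4 - i),
        (a1 i j * r ^ (i + j) * weightedMoment r 0 π (i + 1) j
          + b1 i j * r ^ (i + j) * weightedMoment r 0 π i (j + 1))) +
      (∑ i ∈ range 4, ∑ j ∈ range (4 - i),
        (a2 i j * r ^ (i + j) * weightedMoment r π (2 * π) (i + 1) j
          + b2 i j * r ^ (i + j) * weightedMoment r π (2 * π) i (j + 1))) := by
  simp only [averagedFunction, integral_term_eq_weightedMoment]

noncomputable def chosenA : ℕ → ℕ → ℝ
  | 1, 0 => 876203 / 1000000 / π
  | 3, 0 => 739127 / 1000000 / π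
  | _, _ => 0

noncomputable def chosenB : ℕ → ℕ → ℝ
  | 0, 0 => -549 / 2000000
  | 0, 1 => -862723 / 1000000 / π
  | 0, 2 => -233289 / 2000000
  | 0, 3 => -201 / 1000000 / π
  | 2, 0 => 379028 / 2000000
  | _, _ => 0

noncomputable def closedFormExpr (r t s : ℝ) : ℝ :=
  612317 / 1000000 + 369865 / 1000000 * r - 612866 / 1000000 * t / r - 233289 / 1000000 * r * t
    - (863125 / 1000000 * r + 201 / 1000000 * r ^ 3) * s + (1 - s) / r

noncomputable def closedForm (r : ℝ) : ℝ := closedFormExpr r (arctan r) (√(1 + r ^ 2))⁻¹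

theorem averagedFunction_chosen {r : ℝ} (hr : r ≠ 0) :
    averagedFunction chosenA 0 chosenB 0 r = closedForm r := by
  rw [averagedFunction_eq_sum_weightedMoment]
  simp only [chosenA, chosenB, sum_range_succ, Finset.range_one, sum_singleton, tsub_zero,
    zero_add, zero_mul, pow_zero, mul_one, pow_one, Nat.reduceAdd, Nat.add_one_sub_one, add_zero,
    Nat.reduceSub, Pi.zero_apply, sum_const_zero]
  have hr2 : r ^ 2 ≠ 0 := pow_ne_zero 2 hr
  have h20 : weightedMoment r 0 π 2 0 = (π - π / √(1 + r ^ 2)) / r ^ 2 := by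
    rw [eq_div_iff hr2, mul_comm, sq_mul_weightedMoment_add_two_cos, weightedMoment_zero_zero]
    simp
  have h40 : weightedMoment r 0 π 4 0 = (π / 2 - weightedMoment r 0 π 2 0) / r ^ 2 := by
    rw [eq_div_iff hr2, mul_comm, sq_mul_weightedMoment_add_two_cos]
    simp [integral_cos_sq]
  have h21 : weightedMoment r 0 π 2 1 = (2 - 2 * arctan r / r) / r ^ 2 := by
    rw [eq_div_iff hr2, mul_comm, sq_mul_weightedMoment_add_two_cos, weightedMoment_zero_one hr]
    norm_num [integral_sin]
  rw [weightedMoment_add_two_sin r 0 π 0 2, weightedMoment_add_two_sin r 0 π 2 0,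
    weightedMoment_add_two_sin r 0 π 0 0, weightedMoment_add_two_sin r 0 π 0 1, h40, h20, h21,
    weightedMoment_zero_zero, weightedMoment_zero_one hr, closedForm, closedFormExpr]
  have hk : √(1 + r ^ 2) ≠ 0 := (sqrt_pos.2 (by positivity)).ne'
  field_simp
  ring

theorem exists_finset_zeros_of_sign_changes {f : ℝ → ℝ} {n : ℕ} {x : Fin (n + 1) → ℝ}
    (hx : StrictMono x) (hf : ContinuousOn f (Icc (x 0) (x (Fin.last n))))
    (hsign : ∀ i : Fin n, f (x i.castSucc) * f (x i.succ) < 0) :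
    ∃ S : Finset ℝ, S.card = n ∧ ∀ z ∈ S, z ∈ Ioo (x 0) (x (Fin.last n)) ∧ f z = 0 := by
  have hzero : ∀ i : Fin n, ∃ z ∈ Ioo (x i.castSucc) (x i.succ), f z = 0 := fun i => by
    have hsub : Icc (x i.castSucc) (x i.succ) ⊆ Icc (x 0) (x (Fin.last n)) :=
      Icc_subset_Icc (hx.monotone (Fin.zero_le _)) (hx.monotone (Fin.le_last _))
    have hle := (hx (Fin.castSucc_lt_succ (i := i))).le
    rcases mul_neg_iff.1 (hsign i) with ⟨hpos, hneg⟩ | ⟨hneg, hpos⟩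
    · exact intermediate_value_Ioo' hle (hf.mono hsub) ⟨hneg, hpos⟩
    · exact intermediate_value_Ioo hle (hf.mono hsub) ⟨hneg, hpos⟩
  choose z hz hfz using hzero
  have hz_mono : StrictMono z := fun i j hij => calc
    z i < x i.succ := (hz i).2
    _ ≤ x j.castSucc := hx.monotone (Fin.succ_le_castSucc_iff.2 hij)
    _ < z j := (hz j).1
  refine ⟨univ.image z, by simp [Finset.card_image_of_injective _ hz_mono.injective], ?_⟩
  simp only [Finset.mem_image, Finset.mem_univ, true_and, forall_exists_index,
    forall_apply_eq_imp_iff]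
  exact fun i => ⟨⟨(hx.monotone (Fin.zero_le _)).trans_lt (hz i).1,
    (hz i).2.trans_le (hx.monotone (Fin.le_last _))⟩, hfz i⟩

theorem continuousOn_closedForm : ContinuousOn closedForm (Ioi 0) := by
  unfold closedForm closedFormExpr
  fun_prop (disch := first | exact fun r hr => (hr : (0:ℝ) < r).ne' | intro r hr; positivity)

theorem closedFormExpr_antitone {r t t' s s' : ℝ} (hr : 0 < r) (ht : t ≤ t') (hs : s ≤ s') :
    closedFormExpr r t' s' ≤ closedFormExpr r t s := by
  have hdiff : closedFormExpr r t s - closedFormExpr r t' s'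
      = (t' - t) * (612866 / 1000000 / r + 233289 / 1000000 * r)
        + (s' - s) * (863125 / 1000000 * r + 201 / 1000000 * r ^ 3 + 1 / r) := by
    unfold closedFormExpr
    field_simp
    ring
  rw [← sub_nonneg, hdiff]
  exact add_nonneg (mul_nonneg (sub_nonneg.2 ht) (by positivity))
    (mul_nonneg (sub_nonneg.2 hs) (by positivity))

theorem closedForm_neg_of_le {r t s : ℝ} (hr : 0 < r) (ht : t ≤ arctan r)
    (hs : s ≤ (√(1 + r ^ 2))⁻¹) (h : closedFormExpr r t s < 0) : closedForm r < 0 :=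
  (closedFormExpr_antitone hr ht hs).trans_lt h

theorem closedForm_pos_of_le {r t s : ℝ} (hr : 0 < r) (ht : arctan r ≤ t)
    (hs : (√(1 + r ^ 2))⁻¹ ≤ s) (h : 0 < closedFormExpr r t s) : 0 < closedForm r :=
  h.trans_le (closedFormExpr_antitone hr ht hs)

theorem closedForm_one_tenth_neg : closedForm (1 / 10) < 0 :=
  closedForm_neg_of_le (by norm_num) (arctanTaylor_le_arctan 4 (by norm_num))
    (le_inv_sqrt_of_sq_mul_le (s := 99503717 / 100000000) (by norm_num) (by norm_num))
    (by norm_num [closedFormExpr, arctanTaylor, sum_range_succ])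

theorem closedForm_three_tenths_pos : 0 < closedForm (3 / 10) :=
  closedForm_pos_of_le (by norm_num) (arctan_le_arctanTaylor 4 (by norm_num))
    (inv_sqrt_le_of_one_le_sq_mul (s := 95782630 / 100000000) (by norm_num) (by norm_num)
      (by norm_num))
    (by norm_num [closedFormExpr, arctanTaylor, sum_range_succ])

theorem closedForm_half_neg : closedForm (1 / 2) < 0 :=
  closedForm_neg_of_le (by norm_num) (arctanTaylor_le_arctan 4 (by norm_num))
    (le_inv_sqrt_of_sq_mul_le (s := 89442717 / 100000000) (by norm_num) (by norm_num))
    (by norm_num [closedFormExpr, arctanTaylor, sum_range_succ])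

theorem closedForm_one_pos : 0 < closedForm 1 :=
  closedForm_pos_of_le (t := 3.141593 / 4) (by norm_num) (by rw [arctan_one]; linarith [pi_lt_d6])
    (inv_sqrt_le_of_one_le_sq_mul (s := 70710680 / 100000000) (by norm_num) (by norm_num)
      (by norm_num))
    (by norm_num [closedFormExpr])

theorem closedForm_two_neg : closedForm 2 < 0 :=
  closedForm_neg_of_le (by norm_num)
    (le_arctan_of_arctan_inv_le (by norm_num) (arctan_le_arctanTaylor 4 (by norm_num)))
    (le_inv_sqrt_of_sq_mul_le (s := 44721357 / 100000000) (by norm_num) (by norm_num))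
    (by norm_num [closedFormExpr, arctanTaylor, sum_range_succ])

theorem closedForm_five_pos : 0 < closedForm 5 :=
  closedForm_pos_of_le (by norm_num)
    (arctan_le_of_le_arctan_inv (by norm_num) (arctanTaylor_le_arctan 4 (by norm_num)))
    (inv_sqrt_le_of_one_le_sq_mul (s := 19611615 / 100000000) (by norm_num) (by norm_num)
      (by norm_num))
    (by norm_num [closedFormExpr, arctanTaylor, sum_range_succ])

theorem closedForm_twenty_neg : closedForm 20 < 0 :=
  closedForm_neg_of_le (by norm_num)
    (le_arctan_of_arctan_inv_le (by norm_num) (arctan_le_arctanTaylor 4 (by norm_num)))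
    (le_inv_sqrt_of_sq_mul_le (s := 4993759 / 100000000) (by norm_num) (by norm_num))
    (by norm_num [closedFormExpr, arctanTaylor, sum_range_succ])

theorem exists_six_zeros_closedForm :
    ∃ S : Finset ℝ, S.card = 6 ∧ ∀ z ∈ S, 0 < z ∧ closedForm z = 0 := by
  have hx : StrictMono ![(1 / 10 : ℝ), 3 / 10, 1 / 2, 1, 2, 5, 20] :=
    Fin.strictMono_iff_lt_succ.2 fun i => by fin_cases i <;> simp <;> norm_num
  obtain ⟨S, hcard, hS⟩ := exists_finset_zeros_of_sign_changes hx
    (continuousOn_closedForm.mono fun z hz => lt_of_lt_of_le (by norm_num) hz.1) fun i => by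
      fin_cases i
      exacts [mul_neg_of_neg_of_pos closedForm_one_tenth_neg closedForm_three_tenths_pos,
        mul_neg_of_pos_of_neg closedForm_three_tenths_pos closedForm_half_neg,
        mul_neg_of_neg_of_pos closedForm_half_neg closedForm_one_pos,
        mul_neg_of_pos_of_neg closedForm_one_pos closedForm_two_neg,
        mul_neg_of_neg_of_pos closedForm_two_neg closedForm_five_pos,
        mul_neg_of_pos_of_neg closedForm_five_pos closedForm_twenty_neg]
  exact ⟨S, hcard, fun z hz => ⟨lt_trans (by norm_num) (hS z hz).1.1, (hS z hz).2⟩⟩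

/-- There exist coefficients for which the first-order averaged
function of the piecewise cubic perturbation is not identically zero on
`(0, ∞)` and has at least 6 distinct zeros in `(0, ∞)`. -/
theorem averaged_function_six_zeros_attained :
    ∃ (a1 a2 b1 b2 : ℕ → ℕ → ℝ) (f : ℝ → ℝ),
      (∀ r : ℝ, f r =
        (∑ i ∈ Finset.range 4, ∑ j ∈ Finset.range (4 - i),
          ∫ θ in (0:ℝ)..Real.pi,
            (a1 i j * r ^ (i + j) * Real.cos θ ^ (i + 1) * Real.sin θ ^ j
              + b1 i j * r ^ (i + j) * Real.cos θ ^ i * Real.sin θ ^ (j + 1))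
              / (r ^ 2 * Real.cos θ ^ 2 + 1)) +
        (∑ i ∈ Finset.range 4, ∑ j ∈ Finset.range (4 - i),
          ∫ θ in Real.pi..(2 * Real.pi),
            (a2 i j * r ^ (i + j) * Real.cos θ ^ (i + 1) * Real.sin θ ^ j
              + b2 i j * r ^ (i + j) * Real.cos θ ^ i * Real.sin θ ^ (j + 1))
              / (r ^ 2 * Real.cos θ ^ 2 + 1))) ∧
      (¬ ∀ r ∈ Set.Ioi (0:ℝ), f r = 0) ∧
      ∃ S : Finset ℝ, 6 ≤ S.card ∧ ∀ r ∈ S, r ∈ Set.Ioi (0:ℝ) ∧ f r = 0 := by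
  obtain ⟨S, hcard, hS⟩ := exists_six_zeros_closedForm
  refine ⟨chosenA, 0, chosenB, 0, averagedFunction chosenA 0 chosenB 0, fun r => rfl,
    fun hzero => closedForm_one_pos.ne' ?_, S, hcard.ge, fun z hz => ⟨(hS z hz).1, ?_⟩⟩
  · rw [← averagedFunction_chosen one_ne_zero]
    exact hzero 1 (mem_Ioi.2 one_pos)
  · rw [averagedFunction_chosen (hS z hz).1.ne']
    exact (hS z hz).2
end

section
/- For all real r, I_{0,0}(r) = π / √(1 + r²). -/
/-!
With `s = √(1 + r²)` the integrand has a smooth primitive on all of `ℝ` (`cosSqPrimitive s`), so the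
fundamental theorem of calculus on `[0, π]` gives `π / s` without an improper limit at `π / 2`.
-/

open Real intervalIntegral

lemma sin_sq_add_mul_cos_sq_pos {s : ℝ} (hs : 0 < s) (θ : ℝ) :
    0 < sin θ ^ 2 + s * cos θ ^ 2 := by
  rcases eq_or_ne (cos θ) 0 with h | h
  · nlinarith [sin_sq_add_cos_sq θ]
  · positivity

lemma mul_cos_sq_add_one_pos {c : ℝ} (hc : -1 < c) (θ : ℝ) : 0 < c * cos θ ^ 2 + 1 := by
  have := sin_sq_add_mul_cos_sq_pos (s := c + 1) (by linarith) θ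
  linear_combination this + sin_sq_add_cos_sq θ

/-- On `(-π/2, π/2)` this is the classical primitive `arctan (tan θ / s) / s`: the tangent subtraction
formula shows that `θ` minus the arctan term has tangent `tan θ / s`. Unlike the classical one it does
not jump at the poles of `tan`. -/
noncomputable def cosSqPrimitive (s θ : ℝ) : ℝ :=
  (θ - arctan ((s - 1) * sin θ * cos θ / (sin θ ^ 2 + s * cos θ ^ 2))) / s

lemma hasDerivAt_cosSqPrimitive {s : ℝ} (hs : 0 < s) (θ : ℝ) :
    HasDerivAt (cosSqPrimitive s) (1 / ((s ^ 2 - 1) * cos θ ^ 2 + 1)) θ := by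
  have hD := sin_sq_add_mul_cos_sq_pos hs θ
  have hE := mul_cos_sq_add_one_pos (c := s ^ 2 - 1) (by nlinarith) θ
  have hN := ((hasDerivAt_sin θ).const_mul (s - 1)).fun_mul (hasDerivAt_cos θ)
  have hD' := ((hasDerivAt_sin θ).fun_pow 2).fun_add (((hasDerivAt_cos θ).fun_pow 2).const_mul s)
  refine (((hasDerivAt_id' θ).fun_sub ((hN.fun_div hD' hD.ne').arctan)).div_const s).congr_deriv ?_
  have hsum : 1 + ((s - 1) * sin θ * cos θ / (sin θ ^ 2 + s * cos θ ^ 2)) ^ 2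
      = ((s ^ 2 - 1) * cos θ ^ 2 + 1) / (sin θ ^ 2 + s * cos θ ^ 2) ^ 2 := by
    field_simp
    linear_combination (sin θ ^ 2 + s ^ 2 * cos θ ^ 2 + 1) * sin_sq_add_cos_sq θ
  rw [hsum]
  field_simp
  linear_combination
    (s * (sin θ ^ 2 + cos θ ^ 2 + 1) - s ^ 2 * cos θ ^ 2 - 1 - sin θ ^ 2) * sin_sq_add_cos_sq θ

theorem integral_one_div_mul_cos_sq_add_one {c : ℝ} (hc : -1 < c) :
    ∫ θ in (0 : ℝ)..π, 1 / (c * cos θ ^ 2 + 1) = π / √(1 + c) := by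
  have hint : IntervalIntegrable (fun θ => 1 / (c * cos θ ^ 2 + 1)) MeasureTheory.volume 0 π :=
    (continuous_const.div (by fun_prop) fun θ => (mul_cos_sq_add_one_pos hc θ).ne').intervalIntegrable _ _
  obtain ⟨s, hs, rfl⟩ : ∃ s > 0, c = s ^ 2 - 1 :=
    ⟨√(1 + c), sqrt_pos.2 (by linarith), by rw [sq_sqrt (by linarith)]; ring⟩
  rw [integral_eq_sub_of_hasDerivAt (fun θ _ => hasDerivAt_cosSqPrimitive hs θ) hint,
    show 1 + (s ^ 2 - 1) = s ^ 2 by ring, sqrt_sq hs.le]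
  simp [cosSqPrimitive]

/-- `I_{0,0}(r) = π / √(1 + r²)` for all real `r`. -/
theorem I_zero_zero (r : ℝ) :
    (∫ θ in (0:ℝ)..Real.pi,
        Real.cos θ ^ 0 * Real.sin θ ^ 0 / (r ^ 2 * Real.cos θ ^ 2 + 1))
      = Real.pi / Real.sqrt (1 + r ^ 2) := by
  simpa only [pow_zero, one_mul] using
    integral_one_div_mul_cos_sq_add_one (neg_one_lt_zero.trans_le (sq_nonneg r))
end

section
/- For all real r > 0, I_{2,1}(r) = (2 / r³)(r − arctan r). -/
open Real intervalIntegral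

/- The substitution `u = cos θ` turns the integral into `∫_{-1}^{1} u² / (r²u² + 1) du`, and
`u / r² - arctan (r u) / r³` is an antiderivative of that rational function. -/

theorem integral_comp_cos_mul_sin {g : ℝ → ℝ} (hg : Continuous g) :
    ∫ θ in (0 : ℝ)..π, g (cos θ) * sin θ = ∫ u in (-1 : ℝ)..1, g u := by
  have hsubst := integral_comp_mul_deriv (a := 0) (b := π) (f := cos) (f' := fun θ => -sin θ)
    (fun θ _ => hasDerivAt_cos θ) continuous_sin.neg.continuousOn hg
  rw [cos_zero, cos_pi] at hsubst
  rw [integral_symm 1, ← hsubst, ← integral_neg]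
  simp only [Function.comp_apply, mul_neg, neg_neg]

theorem continuous_sq_div_sq_mul_sq_add_one (r : ℝ) :
    Continuous fun u : ℝ => u ^ 2 / (r ^ 2 * u ^ 2 + 1) :=
  continuous_pow 2 |>.div (by fun_prop) fun u => by positivity

theorem hasDerivAt_sq_div_sq_mul_sq_add_one {r : ℝ} (hr : r ≠ 0) (u : ℝ) :
    HasDerivAt (fun u => u / r ^ 2 - arctan (r * u) / r ^ 3)
      (u ^ 2 / (r ^ 2 * u ^ 2 + 1)) u := by
  have hlin := (hasDerivAt_id u).div_const (r ^ 2)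
  have harctan := ((hasDerivAt_arctan (r * u)).comp u ((hasDerivAt_id u).const_mul r)).div_const
    (r ^ 3)
  refine (hlin.sub harctan).congr_deriv ?_
  simp only [mul_one]
  field_simp
  ring

theorem integral_sq_div_sq_mul_sq_add_one {r : ℝ} (hr : r ≠ 0) :
    ∫ u in (-1 : ℝ)..1, u ^ 2 / (r ^ 2 * u ^ 2 + 1) = 2 / r ^ 3 * (r - arctan r) := by
  rw [integral_eq_sub_of_hasDerivAt (fun u _ => hasDerivAt_sq_div_sq_mul_sq_add_one hr u)
      ((continuous_sq_div_sq_mul_sq_add_one r).intervalIntegrable _ _),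
    mul_one, mul_neg_one, arctan_neg]
  field_simp
  ring

/-- `I_{2,1}(r) = (2 / r³)(r − arctan r)` for all real `r > 0`. -/
theorem I_two_one (r : ℝ) (hr : 0 < r) :
    (∫ θ in (0:ℝ)..Real.pi,
        Real.cos θ ^ 2 * Real.sin θ ^ 1 / (r ^ 2 * Real.cos θ ^ 2 + 1))
      = 2 / r ^ 3 * (r - Real.arctan r) := by
  rw [← integral_sq_div_sq_mul_sq_add_one hr.ne',
    ← integral_comp_cos_mul_sin (continuous_sq_div_sq_mul_sq_add_one r)]
  congr 1 with θ
  ring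
end

section
/- For every vector of real coefficients (α₁, α₂, α₃, α₄, α₅, α₆, α₇) ≠ (0,0,0,0,0,0,0), the function r ↦ α₁ f₁(r) + α₂ f₂(r) + α₃ f₃(r) + α₄ f₄(r) + α₅ f₅(r) + α₆ f₆(r) + α₇ f₇(r) has at most 6 zeros in the open interval (0, ∞). -/
/-!
Repeated Rolle: if `(g / u)' = h / v` on `(0, ∞)` with `v` nonvanishing, then `g` has at most
one more zero there than `h`. The combination vanishes at `0`, so it has no more positive zeros
than its derivative `G2`. Dividing by `r`, `-3r³`, `2r⁵ + 2r⁷`, `15(1 + r²)^(5/2)` and `3 + 7r²`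
before differentiating produces `G3, …, G7`, each with one coefficient fewer (`α₂`, `α₇`, `α₃`,
`α₁`, `α₅` drop out in turn), and `G7 = 4α₆ - α₄ q` with `q` strictly increasing has at most one
zero. If the coefficients of the next function all vanish, the current one is a nonzero multiple
of a positive function and has no zeros at all.
-/

open Real Set

theorem Set.encard_le_encard_add_one_of_interleaved {α : Type*} [LinearOrder α] {s t : Set α}
    (h : ∀ x ∈ s, ∀ y ∈ s, x < y → ∃ z ∈ t, x < z ∧ z < y) : s.encard ≤ t.encard + 1 := by
  obtain ht | ht := t.finite_or_infinite
  · lift t to Finset α using ht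
    by_contra! hlt
    obtain ⟨u, hus, hu⟩ := exists_subset_encard_eq (Order.add_one_le_of_lt hlt)
    rw [encard_coe_eq_coe_finsetCard] at hu
    lift u to Finset α using finite_of_encard_eq_coe hu
    have := Finset.card_le_of_interleaved (s := u) (t := t)
      fun x hx y hy hxy _ ↦ h x (hus hx) y (hus hy) hxy
    rw [encard_coe_eq_coe_finsetCard] at hu
    norm_cast at hu
    omega
  · simp [ht.encard_eq]

theorem encard_zeros_le_encard_zeros_deriv_add_one {f f' : ℝ → ℝ} {s : Set ℝ}
    (hs : s.OrdConnected) (hfc : ContinuousOn f s) (hf : ∀ x ∈ interior s, HasDerivAt f (f' x) x) :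
    {x ∈ s | f x = 0}.encard ≤ {x ∈ interior s | f' x = 0}.encard + 1 := by
  refine encard_le_encard_add_one_of_interleaved fun a ⟨ha, hfa⟩ b ⟨hb, hfb⟩ hab ↦ ?_
  have hIoo : Ioo a b ⊆ interior s := by
    rw [← interior_Icc]
    exact interior_mono (hs.out ha hb)
  obtain ⟨c, hc, hf'c⟩ := exists_hasDerivAt_eq_zero hab (hfc.mono (hs.out ha hb))
    (hfa.trans hfb.symm) fun x hx ↦ hf x (hIoo hx)
  exact ⟨c, ⟨hIoo hc, hf'c⟩, hc⟩

def posZeros (f : ℝ → ℝ) : Set ℝ := {x ∈ Ioi 0 | f x = 0}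

theorem encard_posZeros_eq_zero {f : ℝ → ℝ} (hf : ∀ x > 0, f x ≠ 0) : (posZeros f).encard = 0 :=
  encard_eq_zero.2 <| eq_empty_of_forall_notMem fun x ⟨hx, hfx⟩ ↦ hf x hx hfx

theorem encard_posZeros_le_of_hasDerivAt_of_map_zero {f f' : ℝ → ℝ} (h0 : f 0 = 0)
    (hf : ∀ x ≥ 0, HasDerivAt f (f' x) x) : (posZeros f).encard ≤ (posZeros f').encard := by
  have hrolle := encard_zeros_le_encard_zeros_deriv_add_one (s := Ici 0) ordConnected_Ici
    (fun x hx ↦ (hf x hx).continuousAt.continuousWithinAt)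
    (by rw [interior_Ici]; exact fun x hx ↦ hf x hx.le)
  have hzeros : {x ∈ Ici 0 | f x = 0} = insert 0 (posZeros f) := by
    ext x
    rcases eq_or_ne x 0 with rfl | hx
    · simp [h0]
    · simp [posZeros, hx, hx.symm.le_iff_lt]
  rw [interior_Ici, hzeros, encard_insert_of_notMem (by simp [posZeros])] at hrolle
  exact (ENat.add_le_add_iff_right ENat.one_ne_top).1 hrolle

theorem encard_posZeros_le_of_hasDerivAt_div {g u h v : ℝ → ℝ} (hv : ∀ x > 0, v x ≠ 0)
    (hd : ∀ x > 0, HasDerivAt (fun y ↦ g y / u y) (h x / v x) x) :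
    (posZeros g).encard ≤ (posZeros h).encard + 1 :=
  calc (posZeros g).encard ≤ (posZeros fun y ↦ g y / u y).encard :=
        encard_le_encard fun x ⟨hx, hgx⟩ ↦ ⟨hx, by simp [hgx]⟩
    _ ≤ {x ∈ interior (Ioi 0) | h x / v x = 0}.encard + 1 :=
        encard_zeros_le_encard_zeros_deriv_add_one ordConnected_Ioi
          (fun x hx ↦ (hd x hx).continuousAt.continuousWithinAt)
          (by rw [interior_Ioi]; exact hd)
    _ ≤ (posZeros h).encard + 1 := by
        rw [interior_Ioi]
        gcongr
        exact fun x ⟨hx, hhx⟩ ↦ ⟨hx, (div_eq_zero_iff.1 hhx).resolve_right (hv x hx)⟩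

theorem sqrt_one_add_sq_sq (x : ℝ) : √(1 + x ^ 2) ^ 2 = 1 + x ^ 2 :=
  sq_sqrt (by positivity)

theorem hasDerivAt_sqrt_one_add_sq (x : ℝ) :
    HasDerivAt (fun y ↦ √(1 + y ^ 2)) (x * √(1 + x ^ 2) / (1 + x ^ 2)) x := by
  convert ((hasDerivAt_pow 2 x).const_add 1).sqrt (by positivity) using 1
  field_simp
  rw [sqrt_one_add_sq_sq]
  ring

noncomputable def comb (a₁ a₂ a₃ a₄ a₅ a₆ a₇ : ℝ) (r : ℝ) : ℝ :=
  a₁ * r + a₂ * r ^ 2 + a₃ * (r ^ 2 / √(1 + r ^ 2)) + a₄ * (r ^ 4 / √(1 + r ^ 2))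
    + a₅ * arctan r + a₆ * (r ^ 2 * arctan r) + a₇ * (1 - 1 / √(1 + r ^ 2))

noncomputable def G2 (a₁ a₂ a₃ a₄ a₅ a₆ a₇ : ℝ) (x : ℝ) : ℝ :=
  a₁ + 2 * a₂ * x + (a₅ + a₆ * x ^ 2) / (1 + x ^ 2) + 2 * a₆ * x * arctan x
    + ((2 * a₃ + a₇) * x + (a₃ + 4 * a₄) * x ^ 3 + 3 * a₄ * x ^ 5) / ((1 + x ^ 2) * √(1 + x ^ 2))

noncomputable def G3 (a₁ a₃ a₄ a₅ a₆ a₇ : ℝ) (x : ℝ) : ℝ :=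
  (-a₁ - a₅ + (-2 * a₁ - 3 * a₅ + 3 * a₆) * x ^ 2 + (a₆ - a₁) * x ^ 4) * √(1 + x ^ 2)
    + ((8 * a₄ - 4 * a₃ - 3 * a₇) * x ^ 3 + (8 * a₄ - a₃) * x ^ 5 + 3 * a₄ * x ^ 7)

noncomputable def G4 (a₁ a₃ a₄ a₅ a₆ : ℝ) (x : ℝ) : ℝ :=
  (-3 * a₁ - 3 * a₅ + (-4 * a₁ - 5 * a₅ + 3 * a₆) * x ^ 2 + (a₁ - a₆) * x ^ 4
      + (2 * a₁ - 2 * a₆) * x ^ 6) * √(1 + x ^ 2)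
    + ((2 * a₃ - 16 * a₄) * x ^ 5 + (2 * a₃ - 28 * a₄) * x ^ 7 - 12 * a₄ * x ^ 9)

noncomputable def G5 (a₁ a₄ a₅ a₆ : ℝ) (x : ℝ) : ℝ :=
  (15 * a₁ + 15 * a₅ + (30 * a₁ + 33 * a₅ - 9 * a₆) * x ^ 2
      + (15 * a₁ + 20 * a₅ - 11 * a₆) * x ^ 4) * √(1 + x ^ 2)
    - (24 * a₄ * x ^ 7 + 48 * a₄ * x ^ 9 + 24 * a₄ * x ^ 11)

noncomputable def G6 (a₄ a₅ a₆ : ℝ) (x : ℝ) : ℝ :=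
  3 * a₅ - 9 * a₆ + (7 * a₅ - 13 * a₆) * x ^ 2
    - (84 * a₄ * x ^ 5 + 156 * a₄ * x ^ 7 + 72 * a₄ * x ^ 9) * √(1 + x ^ 2)

noncomputable def G7 (a₄ a₆ : ℝ) (x : ℝ) : ℝ :=
  4 * a₆ - a₄ * ((105 * x ^ 3 + 441 * x ^ 5 + 684 * x ^ 7 + 336 * x ^ 9) * √(1 + x ^ 2))

section Derivatives

variable (a₁ a₂ a₃ a₄ a₅ a₆ a₇ : ℝ) {x : ℝ}

theorem hasDerivAt_comb :
    HasDerivAt (comb a₁ a₂ a₃ a₄ a₅ a₆ a₇) (G2 a₁ a₂ a₃ a₄ a₅ a₆ a₇ x) x := by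
  have hs := hasDerivAt_sqrt_one_add_sq x
  have hs₀ : √(1 + x ^ 2) ≠ 0 := by positivity
  have hatan := hasDerivAt_arctan x
  refine ((((((((hasDerivAt_id x).const_mul a₁).add ((hasDerivAt_pow 2 x).const_mul a₂)).add
    (((hasDerivAt_pow 2 x).div hs hs₀).const_mul a₃)).add
    (((hasDerivAt_pow 4 x).div hs hs₀).const_mul a₄)).add (hatan.const_mul a₅)).add
    (((hasDerivAt_pow 2 x).mul hatan).const_mul a₆)).add
    (((hasDerivAt_const x 1).sub ((hasDerivAt_const x 1).div hs hs₀)).const_mul a₇)).congr_deriv ?_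
  have := sqrt_one_add_sq_sq x
  simp only [G2]
  field_simp
  grind

theorem hasDerivAt_G2_div (hx : 0 < x) :
    HasDerivAt (fun y ↦ G2 a₁ a₂ a₃ a₄ a₅ a₆ a₇ y / y)
      (G3 a₁ a₃ a₄ a₅ a₆ a₇ x / (x ^ 2 * (1 + x ^ 2) ^ 2 * √(1 + x ^ 2))) x := by
  have hs := hasDerivAt_sqrt_one_add_sq x
  have hatan := hasDerivAt_arctan x
  have hsq := (hasDerivAt_pow 2 x).const_add 1
  have hrat := ((hasDerivAt_const x a₅).add ((hasDerivAt_pow 2 x).const_mul a₆)).div hsq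
    (by positivity)
  have halg := ((((hasDerivAt_id x).const_mul (2 * a₃ + a₇)).add
    ((hasDerivAt_pow 3 x).const_mul (a₃ + 4 * a₄))).add
    ((hasDerivAt_pow 5 x).const_mul (3 * a₄))).div (hsq.mul hs) (by dsimp; positivity)
  have hG2 := ((((hasDerivAt_const x a₁).add ((hasDerivAt_id x).const_mul (2 * a₂))).add
    hrat).add (((hasDerivAt_id x).const_mul (2 * a₆)).mul hatan)).add halg
  refine (hG2.div (hasDerivAt_id x) hx.ne').congr_deriv ?_
  have := sqrt_one_add_sq_sq x
  simp only [G3, Pi.add_apply, Pi.mul_apply, Pi.div_apply, id]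
  field_simp
  grind

theorem hasDerivAt_G3_div (hx : 0 < x) :
    HasDerivAt (fun y ↦ G3 a₁ a₃ a₄ a₅ a₆ a₇ y / (-3 * y ^ 3))
      (G4 a₁ a₃ a₄ a₅ a₆ x / (3 * x ^ 4 * (1 + x ^ 2))) x := by
  have hP := ((hasDerivAt_const x (-a₁ - a₅)).add
    ((hasDerivAt_pow 2 x).const_mul (-2 * a₁ - 3 * a₅ + 3 * a₆))).add
    ((hasDerivAt_pow 4 x).const_mul (a₆ - a₁))
  have hQ := (((hasDerivAt_pow 3 x).const_mul (8 * a₄ - 4 * a₃ - 3 * a₇)).add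
    ((hasDerivAt_pow 5 x).const_mul (8 * a₄ - a₃))).add ((hasDerivAt_pow 7 x).const_mul (3 * a₄))
  refine (((hP.mul (hasDerivAt_sqrt_one_add_sq x)).add hQ).div
    ((hasDerivAt_pow 3 x).const_mul (-3)) (by dsimp; positivity)).congr_deriv ?_
  simp only [G4, Pi.add_apply, Pi.mul_apply]
  field_simp
  ring

theorem hasDerivAt_G4_div (hx : 0 < x) :
    HasDerivAt (fun y ↦ G4 a₁ a₃ a₄ a₅ a₆ y / (2 * y ^ 5 + 2 * y ^ 7))
      (G5 a₁ a₄ a₅ a₆ x / (2 * x ^ 6 * (1 + x ^ 2) ^ 2)) x := by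
  have hP := (((hasDerivAt_const x (-3 * a₁ - 3 * a₅)).add
    ((hasDerivAt_pow 2 x).const_mul (-4 * a₁ - 5 * a₅ + 3 * a₆))).add
    ((hasDerivAt_pow 4 x).const_mul (a₁ - a₆))).add
    ((hasDerivAt_pow 6 x).const_mul (2 * a₁ - 2 * a₆))
  have hQ := (((hasDerivAt_pow 5 x).const_mul (2 * a₃ - 16 * a₄)).add
    ((hasDerivAt_pow 7 x).const_mul (2 * a₃ - 28 * a₄))).sub
    ((hasDerivAt_pow 9 x).const_mul (12 * a₄))
  refine (((hP.mul (hasDerivAt_sqrt_one_add_sq x)).add hQ).div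
    (((hasDerivAt_pow 5 x).const_mul 2).add ((hasDerivAt_pow 7 x).const_mul 2))
    (by dsimp; positivity)).congr_deriv ?_
  simp only [G5, Pi.add_apply, Pi.sub_apply, Pi.mul_apply]
  field_simp
  ring

theorem hasDerivAt_G5_div (hx : 0 < x) :
    HasDerivAt (fun y ↦ G5 a₁ a₄ a₅ a₆ y / (15 * (1 + y ^ 2) ^ 2 * √(1 + y ^ 2)))
      (G6 a₄ a₅ a₆ x / (15 * (1 + x ^ 2) ^ 3 / (2 * x))) x := by
  have hs := hasDerivAt_sqrt_one_add_sq x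
  have hP := ((hasDerivAt_const x (15 * a₁ + 15 * a₅)).add
    ((hasDerivAt_pow 2 x).const_mul (30 * a₁ + 33 * a₅ - 9 * a₆))).add
    ((hasDerivAt_pow 4 x).const_mul (15 * a₁ + 20 * a₅ - 11 * a₆))
  have hQ := (((hasDerivAt_pow 7 x).const_mul (24 * a₄)).add
    ((hasDerivAt_pow 9 x).const_mul (48 * a₄))).add ((hasDerivAt_pow 11 x).const_mul (24 * a₄))
  refine (((hP.mul hs).sub hQ).div
    (((((hasDerivAt_pow 2 x).const_add 1).pow 2).const_mul 15).mul hs)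
    (by dsimp; positivity)).congr_deriv ?_
  have := sqrt_one_add_sq_sq x
  simp only [G6, Pi.add_apply, Pi.sub_apply, Pi.mul_apply, Pi.pow_apply]
  field_simp
  grind

theorem hasDerivAt_G6_div (hx : 0 < x) :
    HasDerivAt (fun y ↦ G6 a₄ a₅ a₆ y / (3 + 7 * y ^ 2))
      (G7 a₄ a₆ x / ((3 + 7 * x ^ 2) ^ 2 / (12 * x))) x := by
  have hP := (((hasDerivAt_pow 5 x).const_mul (84 * a₄)).add
    ((hasDerivAt_pow 7 x).const_mul (156 * a₄))).add ((hasDerivAt_pow 9 x).const_mul (72 * a₄))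
  refine ((((hasDerivAt_const x (3 * a₅ - 9 * a₆)).add
    ((hasDerivAt_pow 2 x).const_mul (7 * a₅ - 13 * a₆))).sub
    (hP.mul (hasDerivAt_sqrt_one_add_sq x))).div
    ((hasDerivAt_const x 3).add ((hasDerivAt_pow 2 x).const_mul 7))
    (by dsimp; positivity)).congr_deriv ?_
  simp only [G7, Pi.add_apply, Pi.sub_apply, Pi.mul_apply]
  field_simp
  ring

end Derivatives

section ZeroCounts

variable {a₁ a₂ a₃ a₄ a₅ a₆ a₇ : ℝ}

theorem encard_posZeros_G7_le (h : ¬(a₄ = 0 ∧ a₆ = 0)) : (posZeros (G7 a₄ a₆)).encard ≤ 1 := by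
  by_cases ha₄ : a₄ = 0
  · have ha₆ : a₆ ≠ 0 := fun ha₆ ↦ h ⟨ha₄, ha₆⟩
    exact (encard_posZeros_eq_zero fun x _ ↦ by simp [G7, ha₄, ha₆]).trans_le zero_le
  have hmono : StrictMonoOn (fun x : ℝ ↦
      (105 * x ^ 3 + 441 * x ^ 5 + 684 * x ^ 7 + 336 * x ^ 9) * √(1 + x ^ 2)) (Ioi 0) :=
    fun x (hx : 0 < x) y _ hxy ↦ by dsimp only; gcongr
  refine encard_le_one_iff.2 fun x y ⟨hx, hGx⟩ ⟨hy, hGy⟩ ↦ hmono.injOn hx hy ?_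
  simp only [G7] at hGx hGy
  exact mul_left_cancel₀ ha₄ (by linarith)

theorem encard_posZeros_G6_le (h : ¬(a₄ = 0 ∧ a₅ = 0 ∧ a₆ = 0)) :
    (posZeros (G6 a₄ a₅ a₆)).encard ≤ 2 := by
  by_cases h₄₆ : a₄ = 0 ∧ a₆ = 0
  · obtain ⟨rfl, rfl⟩ := h₄₆
    refine (encard_posZeros_eq_zero fun x _ ↦ ?_).trans_le zero_le
    rw [show G6 0 a₅ 0 x = a₅ * (3 + 7 * x ^ 2) by simp only [G6]; ring]
    have : a₅ ≠ 0 := by tauto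
    positivity
  calc (posZeros (G6 a₄ a₅ a₆)).encard ≤ (posZeros (G7 a₄ a₆)).encard + 1 :=
        encard_posZeros_le_of_hasDerivAt_div (fun x hx ↦ by positivity)
          fun x hx ↦ hasDerivAt_G6_div a₄ a₅ a₆ hx
    _ ≤ 2 := by grw [encard_posZeros_G7_le h₄₆]; rfl

theorem encard_posZeros_G5_le (h : ¬(a₁ = 0 ∧ a₄ = 0 ∧ a₅ = 0 ∧ a₆ = 0)) :
    (posZeros (G5 a₁ a₄ a₅ a₆)).encard ≤ 3 := by
  by_cases hrest : a₄ = 0 ∧ a₅ = 0 ∧ a₆ = 0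
  · obtain ⟨rfl, rfl, rfl⟩ := hrest
    refine (encard_posZeros_eq_zero fun x _ ↦ ?_).trans_le zero_le
    rw [show G5 a₁ 0 0 0 x = a₁ * (15 * (1 + x ^ 2) ^ 2 * √(1 + x ^ 2)) by simp only [G5]; ring]
    have : a₁ ≠ 0 := by tauto
    positivity
  calc (posZeros (G5 a₁ a₄ a₅ a₆)).encard ≤ (posZeros (G6 a₄ a₅ a₆)).encard + 1 :=
        encard_posZeros_le_of_hasDerivAt_div (fun x hx ↦ by positivity)
          fun x hx ↦ hasDerivAt_G5_div a₁ a₄ a₅ a₆ hx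
    _ ≤ 3 := by grw [encard_posZeros_G6_le hrest]; rfl

theorem encard_posZeros_G4_le (h : ¬(a₁ = 0 ∧ a₃ = 0 ∧ a₄ = 0 ∧ a₅ = 0 ∧ a₆ = 0)) :
    (posZeros (G4 a₁ a₃ a₄ a₅ a₆)).encard ≤ 4 := by
  by_cases hrest : a₁ = 0 ∧ a₄ = 0 ∧ a₅ = 0 ∧ a₆ = 0
  · obtain ⟨rfl, rfl, rfl, rfl⟩ := hrest
    refine (encard_posZeros_eq_zero fun x (hx : 0 < x) ↦ ?_).trans_le zero_le
    rw [show G4 0 a₃ 0 0 0 x = a₃ * (2 * x ^ 5 + 2 * x ^ 7) by simp only [G4]; ring]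
    have : a₃ ≠ 0 := by tauto
    positivity
  calc (posZeros (G4 a₁ a₃ a₄ a₅ a₆)).encard ≤ (posZeros (G5 a₁ a₄ a₅ a₆)).encard + 1 :=
        encard_posZeros_le_of_hasDerivAt_div (fun x hx ↦ by positivity)
          fun x hx ↦ hasDerivAt_G4_div a₁ a₃ a₄ a₅ a₆ hx
    _ ≤ 4 := by grw [encard_posZeros_G5_le hrest]; rfl

theorem encard_posZeros_G3_le (h : ¬(a₁ = 0 ∧ a₃ = 0 ∧ a₄ = 0 ∧ a₅ = 0 ∧ a₆ = 0 ∧ a₇ = 0)) :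
    (posZeros (G3 a₁ a₃ a₄ a₅ a₆ a₇)).encard ≤ 5 := by
  by_cases hrest : a₁ = 0 ∧ a₃ = 0 ∧ a₄ = 0 ∧ a₅ = 0 ∧ a₆ = 0
  · obtain ⟨rfl, rfl, rfl, rfl, rfl⟩ := hrest
    refine (encard_posZeros_eq_zero fun x (hx : 0 < x) ↦ ?_).trans_le zero_le
    rw [show G3 0 0 0 0 0 a₇ x = -(a₇ * (3 * x ^ 3)) by simp only [G3]; ring, neg_ne_zero]
    have : a₇ ≠ 0 := by tauto
    positivity
  calc (posZeros (G3 a₁ a₃ a₄ a₅ a₆ a₇)).encard ≤ (posZeros (G4 a₁ a₃ a₄ a₅ a₆)).encard + 1 :=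
        encard_posZeros_le_of_hasDerivAt_div (fun x hx ↦ by positivity)
          fun x hx ↦ hasDerivAt_G3_div a₁ a₃ a₄ a₅ a₆ a₇ hx
    _ ≤ 5 := by grw [encard_posZeros_G4_le hrest]; rfl

theorem encard_posZeros_G2_le
    (h : ¬(a₁ = 0 ∧ a₂ = 0 ∧ a₃ = 0 ∧ a₄ = 0 ∧ a₅ = 0 ∧ a₆ = 0 ∧ a₇ = 0)) :
    (posZeros (G2 a₁ a₂ a₃ a₄ a₅ a₆ a₇)).encard ≤ 6 := by
  by_cases hrest : a₁ = 0 ∧ a₃ = 0 ∧ a₄ = 0 ∧ a₅ = 0 ∧ a₆ = 0 ∧ a₇ = 0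
  · obtain ⟨rfl, rfl, rfl, rfl, rfl, rfl⟩ := hrest
    refine (encard_posZeros_eq_zero fun x (hx : 0 < x) ↦ ?_).trans_le zero_le
    rw [show G2 0 a₂ 0 0 0 0 0 x = a₂ * (2 * x) by simp only [G2]; ring]
    have : a₂ ≠ 0 := by tauto
    positivity
  calc (posZeros (G2 a₁ a₂ a₃ a₄ a₅ a₆ a₇)).encard
      ≤ (posZeros (G3 a₁ a₃ a₄ a₅ a₆ a₇)).encard + 1 :=
        encard_posZeros_le_of_hasDerivAt_div (fun x hx ↦ by positivity)
          fun x hx ↦ hasDerivAt_G2_div a₁ a₂ a₃ a₄ a₅ a₆ a₇ hx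
    _ ≤ 6 := by grw [encard_posZeros_G3_le hrest]; rfl

end ZeroCounts

/-- Any nontrivial real linear combination of the seven generating
functions `r`, `r²`, `r²/√(1+r²)`, `r⁴/√(1+r²)`, `arctan r`, `r² arctan r`,
`1 − 1/√(1+r²)` has at most 6 zeros in `(0, ∞)`. -/
theorem combination_seven_at_most_six_zeros
    (α₁ α₂ α₃ α₄ α₅ α₆ α₇ : ℝ)
    (hα : (α₁, α₂, α₃, α₄, α₅, α₆, α₇) ≠ (0, 0, 0, 0, 0, 0, 0)) :
    ∃ S : Finset ℝ, S.card ≤ 6 ∧ ∀ r ∈ Set.Ioi (0:ℝ),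
      α₁ * r + α₂ * r ^ 2 + α₃ * (r ^ 2 / Real.sqrt (1 + r ^ 2))
        + α₄ * (r ^ 4 / Real.sqrt (1 + r ^ 2)) + α₅ * Real.arctan r
        + α₆ * (r ^ 2 * Real.arctan r)
        + α₇ * (1 - 1 / Real.sqrt (1 + r ^ 2)) = 0 → r ∈ S := by
  have hne : ¬(α₁ = 0 ∧ α₂ = 0 ∧ α₃ = 0 ∧ α₄ = 0 ∧ α₅ = 0 ∧ α₆ = 0 ∧ α₇ = 0) := by
    rintro ⟨rfl, rfl, rfl, rfl, rfl, rfl, rfl⟩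
    exact hα rfl
  have hzeros : (posZeros (comb α₁ α₂ α₃ α₄ α₅ α₆ α₇)).encard ≤ 6 :=
    (encard_posZeros_le_of_hasDerivAt_of_map_zero (by simp [comb])
      fun _ _ ↦ hasDerivAt_comb α₁ α₂ α₃ α₄ α₅ α₆ α₇).trans (encard_posZeros_G2_le hne)
  have hfin := finite_of_encard_le_coe hzeros
  refine ⟨hfin.toFinset, ?_, fun r hr hr₀ ↦ hfin.mem_toFinset.2 ⟨hr, hr₀⟩⟩
  rw [hfin.encard_eq_coe_toFinset_card] at hzeros
  exact_mod_cast hzeros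
end

section
/- For every vector of real coefficients (β₂, β₃, β₄, β₇) ≠ (0,0,0,0), the function r ↦ β₂ f₂(r) + β₃ f₃(r) + β₄ f₄(r) + β₇ f₇(r) has at most 3 zeros in the open interval (0, ∞). -/
/-!
Substituting `s = √(1 + r²)`, which maps `(0, ∞)` injectively into `(1, ∞)`, and multiplying by
`s / (s - 1)` turns the combination into a cubic polynomial in `s`, whose coefficients
determine `β` linearly and invertibly. A nonzero cubic has at most three roots.
-/

open Polynomial

noncomputable def combination (β₂ β₃ β₄ β₇ r : ℝ) : ℝ :=
  β₂ * r ^ 2 + β₃ * (r ^ 2 / √(1 + r ^ 2)) + β₄ * (r ^ 4 / √(1 + r ^ 2))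
    + β₇ * (1 - 1 / √(1 + r ^ 2))

noncomputable def combinationPoly (β₂ β₃ β₄ β₇ : ℝ) : ℝ[X] :=
  C β₄ * X ^ 3 + C (β₂ + β₄) * X ^ 2 + C (β₂ + β₃ - β₄) * X + C (β₃ - β₄ + β₇)

section

variable (β₂ β₃ β₄ β₇ : ℝ)

theorem natDegree_combinationPoly_le : (combinationPoly β₂ β₃ β₄ β₇).natDegree ≤ 3 := by
  unfold combinationPoly
  compute_degree

theorem sub_one_mul_eval_combinationPoly (r : ℝ) :
    (√(1 + r ^ 2) - 1) * (combinationPoly β₂ β₃ β₄ β₇).eval √(1 + r ^ 2) =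
      √(1 + r ^ 2) * combination β₂ β₃ β₄ β₇ r := by
  rw [combination]
  set s := √(1 + r ^ 2)
  have hs2 : s ^ 2 = 1 + r ^ 2 := Real.sq_sqrt (by positivity)
  have hs0 : s ≠ 0 := by positivity
  have hr4 : r ^ 4 = (s ^ 2 - 1) ^ 2 := by rw [hs2]; ring
  rw [hr4, show r ^ 2 = s ^ 2 - 1 by linarith]
  simp only [combinationPoly, eval_add, eval_mul, eval_pow, eval_C, eval_X]
  field_simp
  ring

variable {β₂ β₃ β₄ β₇}

theorem combinationPoly_ne_zero (hβ : (β₂, β₃, β₄, β₇) ≠ (0, 0, 0, 0)) :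
    combinationPoly β₂ β₃ β₄ β₇ ≠ 0 := by
  contrapose! hβ
  have c3 := congrArg (coeff · 3) hβ
  have c2 := congrArg (coeff · 2) hβ
  have c1 := congrArg (coeff · 1) hβ
  have c0 := congrArg (coeff · 0) hβ
  simp only [combinationPoly, coeff_add, coeff_C_mul, coeff_X_pow, coeff_X, coeff_C,
    coeff_zero] at c3 c2 c1 c0
  norm_num at c3 c2 c1 c0
  simp only [Prod.mk.injEq]
  refine ⟨?_, ?_, ?_, ?_⟩ <;> linarith

theorem isRoot_combinationPoly_sqrt {r : ℝ} (hr : r ≠ 0) (h : combination β₂ β₃ β₄ β₇ r = 0) :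
    (combinationPoly β₂ β₃ β₄ β₇).IsRoot √(1 + r ^ 2) := by
  have key := sub_one_mul_eval_combinationPoly β₂ β₃ β₄ β₇ r
  rw [h, mul_zero] at key
  have hs1 : 1 < √(1 + r ^ 2) := Real.lt_sqrt_of_sq_lt (by simp; positivity)
  exact (mul_eq_zero.1 key).resolve_left (sub_ne_zero.2 hs1.ne')

end

theorem Polynomial.exists_finset_card_le_natDegree_of_injOn {R α : Type*} [CommRing R]
    [IsDomain R] {p : R[X]} (hp : p ≠ 0) {A : Set α} {g : α → R} (hg : Set.InjOn g A)
    (hroot : ∀ x ∈ A, p.IsRoot (g x)) :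
    ∃ S : Finset α, S.card ≤ p.natDegree ∧ ∀ x ∈ A, x ∈ S := by
  classical
  have hmaps : Set.MapsTo g A p.roots.toFinset := fun x hx => by
    simpa [mem_roots hp] using hroot x hx
  have hfin : A.Finite :=
    Set.Finite.of_finite_image (p.roots.toFinset.finite_toSet.subset hmaps.image_subset) hg
  refine ⟨hfin.toFinset, ?_, fun x hx => hfin.mem_toFinset.2 hx⟩
  calc hfin.toFinset.card = A.ncard := (Set.ncard_eq_toFinset_card _ hfin).symm
    _ ≤ (p.roots.toFinset : Set R).ncard :=
        Set.ncard_le_ncard_of_injOn g hmaps hg (Finset.finite_toSet _)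
    _ = p.roots.toFinset.card := Set.ncard_coe_finset _
    _ ≤ Multiset.card p.roots := Multiset.toFinset_card_le _
    _ ≤ p.natDegree := card_roots' p

theorem injOn_sqrt_one_add_sq : Set.InjOn (fun r : ℝ => √(1 + r ^ 2)) (Set.Ioi 0) := by
  intro a ha b hb h
  have hsq := (Real.sqrt_inj (by positivity) (by positivity)).1 h
  exact (pow_left_inj₀ ha.le hb.le two_ne_zero).1 (by linarith)

/-- Any nontrivial real linear combination of the functions
`r²`, `r²/√(1+r²)`, `r⁴/√(1+r²)`, `1 − 1/√(1+r²)` has at most 3 zeros in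
`(0, ∞)`. -/
theorem combination_four_at_most_three_zeros
    (β₂ β₃ β₄ β₇ : ℝ) (hβ : (β₂, β₃, β₄, β₇) ≠ (0, 0, 0, 0)) :
    ∃ S : Finset ℝ, S.card ≤ 3 ∧ ∀ r ∈ Set.Ioi (0:ℝ),
      β₂ * r ^ 2 + β₃ * (r ^ 2 / Real.sqrt (1 + r ^ 2))
        + β₄ * (r ^ 4 / Real.sqrt (1 + r ^ 2))
        + β₇ * (1 - 1 / Real.sqrt (1 + r ^ 2)) = 0 → r ∈ S := by
  obtain ⟨S, hcard, hS⟩ := exists_finset_card_le_natDegree_of_injOn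
    (A := {r | 0 < r ∧ combination β₂ β₃ β₄ β₇ r = 0}) (combinationPoly_ne_zero hβ)
    (injOn_sqrt_one_add_sq.mono fun r hr => hr.1)
    fun r hr => isRoot_combinationPoly_sqrt hr.1.ne' hr.2
  exact ⟨S, hcard.trans (natDegree_combinationPoly_le ..), fun r hr h => hS r ⟨hr, h⟩⟩
end

section
/- For all real r > 0, the Wronskians of the first three and first four generating functions satisfy W[f₁, f₂, f₃](r) = −3r⁴/(r²+1)^{5/2} and W[f₁, f₂, f₃, f₄](r) = −6r⁷(4r²+5)/(r²+1)⁵. -/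
/-!
Each `fⱼ` has the form `pⱼ(r) (1 + r²)^cⱼ` with a polynomial `pⱼ` and `cⱼ ∈ {0, -1/2}`, and
differentiating `p q^c` gives `(p' q + c q' p) q^(c-1)`, again of this form. Hence the `i`-th
derivative of `fⱼ` is a polynomial times `(1 + r²)^cⱼ / (1 + r²)^i`, and both Wronskians reduce
to polynomial identities once `√(1 + r²)² = 1 + r²` is used.
-/

/-- The first four generating functions `f₁, f₂, f₃, f₄`. -/
noncomputable def genFun4 : Fin 4 → ℝ → ℝ :=
  ![fun r => r,
    fun r => r ^ 2,
    fun r => r ^ 2 / Real.sqrt (1 + r ^ 2),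
    fun r => r ^ 4 / Real.sqrt (1 + r ^ 2)]

open Polynomial

noncomputable def rpowIterDerivPoly (p q : ℝ[X]) (c : ℝ) : ℕ → ℝ[X]
  | 0 => p
  | n + 1 => derivative (rpowIterDerivPoly p q c n) * q
      + C (c - n) * derivative q * rpowIterDerivPoly p q c n

theorem hasDerivAt_eval_mul_eval_rpow (p q : ℝ[X]) (c x : ℝ) (hq : q.eval x ≠ 0) :
    HasDerivAt (fun y => p.eval y * q.eval y ^ c)
      ((derivative p * q + C c * derivative q * p).eval x * q.eval x ^ (c - 1)) x := by
  have h := (p.hasDerivAt x).mul ((q.hasDerivAt x).rpow_const (p := c) (Or.inl hq))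
  refine h.congr_deriv ?_
  rw [Real.rpow_sub_one hq]
  simp only [eval_add, eval_mul, eval_C]
  field_simp

theorem iteratedDeriv_eval_mul_eval_rpow (p q : ℝ[X]) (c : ℝ) (hq : ∀ x, q.eval x ≠ 0)
    (n : ℕ) :
    iteratedDeriv n (fun x => p.eval x * q.eval x ^ c)
      = fun x => (rpowIterDerivPoly p q c n).eval x * q.eval x ^ (c - n) := by
  induction n with
  | zero => simp [rpowIterDerivPoly]
  | succ n ih =>
    rw [iteratedDeriv_succ, ih]
    funext x
    rw [(hasDerivAt_eval_mul_eval_rpow _ q (c - n) x (hq x)).deriv, rpowIterDerivPoly, Nat.cast_succ, sub_sub]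

noncomputable def genFun4Poly : Fin 4 → ℝ[X] := ![X, X ^ 2, X ^ 2, X ^ 4]

noncomputable def genFun4Exp : Fin 4 → ℝ := ![0, 0, -1 / 2, -1 / 2]

theorem genFun4_eq_eval_mul_rpow (j : Fin 4) :
    genFun4 j = fun x => (genFun4Poly j).eval x * (1 + X ^ 2 : ℝ[X]).eval x ^ genFun4Exp j := by
  funext x
  have hu : 0 ≤ 1 + x ^ 2 := by positivity
  fin_cases j <;>
    simp [genFun4, genFun4Poly, genFun4Exp, Real.sqrt_eq_rpow, Real.rpow_neg hu, div_eq_mul_inv]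

theorem iteratedDeriv_genFun4 (i : ℕ) (j : Fin 4) (x : ℝ) :
    iteratedDeriv i (genFun4 j) x
      = (rpowIterDerivPoly (genFun4Poly j) (1 + X ^ 2) (genFun4Exp j) i).eval x
        * (1 + x ^ 2) ^ genFun4Exp j / (1 + x ^ 2) ^ i := by
  have hq : ∀ y : ℝ, (1 + X ^ 2 : ℝ[X]).eval y ≠ 0 := fun y => by simp; positivity
  rw [genFun4_eq_eval_mul_rpow, iteratedDeriv_eval_mul_eval_rpow _ _ _ hq]
  beta_reduce
  rw [Real.rpow_sub_natCast (hq x)]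
  simp [mul_div_assoc]

/-- For all `r > 0`,
`W[f₁, f₂, f₃](r) = −3r⁴/(r²+1)^{5/2}` and
`W[f₁, f₂, f₃, f₄](r) = −6r⁷(4r²+5)/(r²+1)⁵`. -/
theorem wronskian_three_and_four (r : ℝ) :
    (Matrix.of fun i j : Fin 3 =>
        iteratedDeriv (i : ℕ) (genFun4 (Fin.castLE (by norm_num) j)) r).det
      = -(3 * r ^ 4) / Real.sqrt (r ^ 2 + 1) ^ 5 ∧
    (Matrix.of fun i j : Fin 4 =>
        iteratedDeriv (i : ℕ) (genFun4 j) r).det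
      = -(6 * r ^ 7 * (4 * r ^ 2 + 5)) / (r ^ 2 + 1) ^ 5 := by
  have hu : 0 < 1 + r ^ 2 := by positivity
  have hs : Real.sqrt (1 + r ^ 2) ^ 2 = 1 + r ^ 2 := Real.sq_sqrt hu.le
  have half : (1 + r ^ 2) ^ (-1 / 2 : ℝ) = (Real.sqrt (1 + r ^ 2))⁻¹ := by
    rw [Real.sqrt_eq_rpow, ← Real.rpow_neg hu.le]; norm_num
  simp only [Matrix.det_succ_row_zero, Fin.sum_univ_succ, Matrix.of_apply,
    Matrix.submatrix_apply, Matrix.det_unique, iteratedDeriv_genFun4]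
  simp [Fin.succAbove, Fin.lt_def, genFun4Poly, genFun4Exp, rpowIterDerivPoly, half,
    add_comm (r ^ 2) 1]
  constructor
  · field_simp
    linear_combination (-12 * r ^ 4 * (Real.sqrt (1 + r ^ 2) ^ 2 + 1 + r ^ 2)) * hs
  · field_simp
    linear_combination (960 * r ^ 7 + 768 * r ^ 9) * hs
end

section
/- For all real r > 0, g₁(r) > 0, where g₁(r) = 12r¹⁰ arctan r − 27r⁸ arctan r + 12r⁹ − 258r⁶ arctan r + 169r⁷ − 507r⁴ arctan r + 411r⁵ − 408r² arctan r + 373r³ − 120 arctan r + 120r. -/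
/-! `g₁(r)` is affine in `a = arctan r`: the term `12 r¹⁰ a` is bounded below by the Padé lower
bound `arctan r ≥ 3r / (3 + r²)`, the term `-(27 r⁸ + 258 r⁶ + 507 r⁴ + 408 r² + 120) a` by the
Padé upper bound `arctan r ≤ r (15 + 4r²) / (15 + 9r²)`, both valid for `r ≥ 0` because the
differences vanish at `0` and have nonnegative derivatives.  After clearing the denominators
`(3 + r²)(15 + 9r²)` what remains is an odd polynomial in `r` with positive coefficients. -/

open Real

theorem le_of_hasDerivAt_le {f g f' g' : ℝ → ℝ} (hf : ∀ x, HasDerivAt f (f' x) x)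
    (hg : ∀ x, HasDerivAt g (g' x) x) (h' : ∀ x, f' x ≤ g' x) {a x : ℝ} (ha : f a ≤ g a)
    (hx : a ≤ x) : f x ≤ g x := by
  have hmono : Monotone (g - f) :=
    monotone_of_hasDerivAt_nonneg (fun x ↦ (hg x).sub (hf x)) fun x ↦ sub_nonneg.2 (h' x)
  have := (sub_nonneg.2 ha).trans (hmono hx)
  simpa [sub_nonneg] using this

theorem Real.three_mul_div_le_arctan {x : ℝ} (hx : 0 ≤ x) : 3 * x / (3 + x ^ 2) ≤ arctan x := by
  have hderiv (y : ℝ) :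
      HasDerivAt (fun y ↦ 3 * y / (3 + y ^ 2)) ((9 - 3 * y ^ 2) / (3 + y ^ 2) ^ 2) y := by
    refine (((hasDerivAt_id' y).const_mul 3).div ((hasDerivAt_pow 2 y).const_add 3)
      (by positivity)).congr_deriv ?_
    push_cast
    ring
  refine le_of_hasDerivAt_le hderiv hasDerivAt_arctan (fun y ↦ ?_) (by simp) hx
  rw [div_le_div_iff₀ (by positivity) (by positivity)]
  nlinarith [pow_nonneg (sq_nonneg y) 2, sq_nonneg y]

theorem Real.arctan_le_mul_div {x : ℝ} (hx : 0 ≤ x) :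
    arctan x ≤ x * (15 + 4 * x ^ 2) / (15 + 9 * x ^ 2) := by
  have hderiv (y : ℝ) : HasDerivAt (fun y ↦ y * (15 + 4 * y ^ 2) / (15 + 9 * y ^ 2))
      ((225 + 45 * y ^ 2 + 36 * y ^ 4) / (15 + 9 * y ^ 2) ^ 2) y := by
    refine (((hasDerivAt_id' y).mul (((hasDerivAt_pow 2 y).const_mul 4).const_add 15)).div
      (((hasDerivAt_pow 2 y).const_mul 9).const_add 15) (by positivity)).congr_deriv ?_
    push_cast [Pi.mul_apply]
    ring
  refine le_of_hasDerivAt_le hasDerivAt_arctan hderiv (fun y ↦ ?_) (by simp) hx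
  rw [div_le_div_iff₀ (by positivity) (by positivity)]
  nlinarith [pow_nonneg (sq_nonneg y) 3, sq_nonneg y]

def g₁ (r a : ℝ) : ℝ :=
  12 * r ^ 10 * a - 27 * r ^ 8 * a + 12 * r ^ 9 - 258 * r ^ 6 * a + 169 * r ^ 7
    - 507 * r ^ 4 * a + 411 * r ^ 5 - 408 * r ^ 2 * a + 373 * r ^ 3 - 120 * a + 120 * r

theorem g₁_mul_eq (r a : ℝ) :
    g₁ r a * ((3 + r ^ 2) * (15 + 9 * r ^ 2)) =
      12 * r ^ 10 * (15 + 9 * r ^ 2) * (a * (3 + r ^ 2) - 3 * r)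
        + (27 * r ^ 8 + 258 * r ^ 6 + 507 * r ^ 4 + 408 * r ^ 2 + 120) * (3 + r ^ 2)
          * (r * (15 + 4 * r ^ 2) - a * (15 + 9 * r ^ 2))
        + (225 * r ^ 3 + 930 * r ^ 5 + 1293 * r ^ 7 + 1128 * r ^ 9 + 804 * r ^ 11
          + 324 * r ^ 13) := by
  unfold g₁
  ring

theorem g₁_pos_of_bounds {r a : ℝ} (hr : 0 < r) (hlower : 3 * r ≤ a * (3 + r ^ 2))
    (hupper : a * (15 + 9 * r ^ 2) ≤ r * (15 + 4 * r ^ 2)) : 0 < g₁ r a := by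
  have hD : 0 < (3 + r ^ 2) * (15 + 9 * r ^ 2) := by positivity
  refine pos_of_mul_pos_left ?_ hD.le
  rw [g₁_mul_eq]
  have h₁ : 0 ≤ 12 * r ^ 10 * (15 + 9 * r ^ 2) * (a * (3 + r ^ 2) - 3 * r) :=
    mul_nonneg (by positivity) (sub_nonneg.2 hlower)
  have h₂ : 0 ≤ (27 * r ^ 8 + 258 * r ^ 6 + 507 * r ^ 4 + 408 * r ^ 2 + 120) * (3 + r ^ 2)
      * (r * (15 + 4 * r ^ 2) - a * (15 + 9 * r ^ 2)) :=
    mul_nonneg (by positivity) (sub_nonneg.2 hupper)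
  have h₃ : 0 < 225 * r ^ 3 + 930 * r ^ 5 + 1293 * r ^ 7 + 1128 * r ^ 9 + 804 * r ^ 11
      + 324 * r ^ 13 := by positivity
  linarith

/-- For all real `r > 0`, `g₁(r) > 0`, where `g₁` is the factor
appearing in the Wronskian `W[f₁, …, f₅](r) = 12 r³ g₁(r)/(r²+1)⁹`. -/
theorem g1_pos (r : ℝ) (hr : 0 < r) :
    0 < 12 * r ^ 10 * Real.arctan r - 27 * r ^ 8 * Real.arctan r + 12 * r ^ 9
      - 258 * r ^ 6 * Real.arctan r + 169 * r ^ 7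
      - 507 * r ^ 4 * Real.arctan r + 411 * r ^ 5
      - 408 * r ^ 2 * Real.arctan r + 373 * r ^ 3
      - 120 * Real.arctan r + 120 * r := by
  refine g₁_pos_of_bounds (a := arctan r) hr ?_ ?_
  · rw [← div_le_iff₀ (by positivity)]
    exact three_mul_div_le_arctan hr.le
  · rw [← le_div_iff₀ (by positivity)]
    exact arctan_le_mul_div hr.le
end

section
/- For all real r > 0, g₂(r) > 0, where g₂(r) = 216r¹² arctan r + 168r¹⁰ arctan r + 216r¹¹ + 843r⁸ arctan r + 96r⁹ + 4986r⁶ arctan r − 3061r⁷ + 8175r⁴ arctan r − 6655r⁵ + 5160r² arctan r − 4800r³ + 1080 arctan r − 1080r. -/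
/-!
Write `g₂ = P · arctan − Q` with `P > 0`; it suffices to bound `arctan r` from below by something
exceeding `Q / P`. Since `g₂(r) = 16 r⁵ + O(r⁷)`, near `0` this needs a long Taylor polynomial: for
`r ≤ 1` we use the partial sum of the arctan series up to `r¹⁵`, which, having an even number of
terms, is a lower bound for `arctan` on all of `[0, ∞)`. For `r ≥ 1` the constant bound
`arctan r ≥ π / 4 > 39 / 50` suffices.
-/

open Finset Real

namespace Real

theorem hasDerivAt_arctan_series (n : ℕ) (x : ℝ) :
    HasDerivAt (fun y : ℝ ↦ ∑ k ∈ range n, (-1) ^ k * y ^ (2 * k + 1) / (2 * k + 1))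
      (∑ k ∈ range n, (-x ^ 2) ^ k) x := by
  refine (HasDerivAt.fun_sum fun k _ ↦
    (((hasDerivAt_pow (2 * k + 1) x).const_mul ((-1) ^ k)).div_const _)).congr_deriv ?_
  refine sum_congr rfl fun k _ ↦ ?_
  push_cast
  field_simp
  ring

theorem sum_range_arctan_series_le_arctan (n : ℕ) {x : ℝ} (hx : 0 ≤ x) :
    ∑ k ∈ range (2 * n), (-1) ^ k * x ^ (2 * k + 1) / (2 * k + 1) ≤ arctan x := by
  have hmono : Monotone fun y : ℝ ↦
      arctan y - ∑ k ∈ range (2 * n), (-1) ^ k * y ^ (2 * k + 1) / (2 * k + 1) := by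
    refine monotone_of_hasDerivAt_nonneg
      (fun y ↦ (hasDerivAt_arctan y).sub (hasDerivAt_arctan_series (2 * n) y)) fun y ↦ ?_
    have herr : 1 / (1 + y ^ 2) - ∑ k ∈ range (2 * n), (-y ^ 2) ^ k =
        (y ^ 2) ^ (2 * n) / (1 + y ^ 2) := by
      have := geom_sum_mul_neg (-y ^ 2) (2 * n)
      rw [(even_two_mul n).neg_pow] at this
      field_simp
      linear_combination -this
    simp only [Pi.zero_apply, herr]
    positivity
  simpa using hmono hx

theorem lt_arctan_of_one_le {x : ℝ} (hx : 1 ≤ x) : 39 / 50 < arctan x :=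
  calc (39 : ℝ) / 50 < π / 4 := by linarith [pi_gt_d2]
    _ = arctan 1 := arctan_one.symm
    _ ≤ arctan x := arctan_strictMono.monotone hx

end Real

def g2ArctanCoeff (r : ℝ) : ℝ :=
  216 * r ^ 12 + 168 * r ^ 10 + 843 * r ^ 8 + 4986 * r ^ 6 + 8175 * r ^ 4 + 5160 * r ^ 2 + 1080

def g2PolyPart (r : ℝ) : ℝ :=
  -216 * r ^ 11 - 96 * r ^ 9 + 3061 * r ^ 7 + 6655 * r ^ 5 + 4800 * r ^ 3 + 1080 * r

theorem g2PolyPart_lt_of_le_one {r : ℝ} (hr₀ : 0 < r) (hr₁ : r ≤ 1) :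
    g2PolyPart r <
      g2ArctanCoeff r * ∑ k ∈ range 8, (-1) ^ k * r ^ (2 * k + 1) / (2 * k + 1) := by
  have hpow {m n : ℕ} (h : m ≤ n) : r ^ n ≤ r ^ m := pow_le_pow_of_le_one hr₀.le hr₁ h
  simp only [g2PolyPart, g2ArctanCoeff, sum_range_succ, sum_range_zero]
  norm_num
  -- the difference is `16 r⁵ + ⋯`, and its negative monomials all have degree `≥ 15`
  linarith [hpow (show 5 ≤ 15 by norm_num), hpow (show 7 ≤ 15 by norm_num),
    hpow (show 9 ≤ 15 by norm_num), hpow (show 11 ≤ 15 by norm_num),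
    hpow (show 13 ≤ 15 by norm_num), hpow (show 15 ≤ 17 by norm_num),
    hpow (show 15 ≤ 19 by norm_num), hpow (show 15 ≤ 21 by norm_num),
    hpow (show 15 ≤ 23 by norm_num), hpow (show 15 ≤ 27 by norm_num),
    pow_pos hr₀ 15, pow_pos hr₀ 25]

theorem g2PolyPart_lt_of_one_le {r : ℝ} (hr : 1 ≤ r) :
    g2PolyPart r < g2ArctanCoeff r * (39 / 50) := by
  -- expanded around `r = 1`, only the coefficient of `r - 1` is negative
  obtain ⟨s, hs, rfl⟩ : ∃ s, 0 ≤ s ∧ r = 1 + s := ⟨r - 1, by linarith, by ring⟩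
  have hquad : 0 < 80584 - 145944 * s + 615260 * s ^ 2 := by nlinarith [sq_nonneg (s - 1/8)]
  simp only [g2PolyPart, g2ArctanCoeff]
  linarith [pow_nonneg hs 3, pow_nonneg hs 4, pow_nonneg hs 5, pow_nonneg hs 6, pow_nonneg hs 7,
    pow_nonneg hs 8, pow_nonneg hs 9, pow_nonneg hs 10, pow_nonneg hs 11, pow_nonneg hs 12]

/-- For all real `r > 0`, `g₂(r) > 0`, where `g₂` is the factor
appearing in the Wronskian `W[f₁, …, f₆](r) = −24 r g₂(r)/(r²+1)¹³`. -/
theorem g2_pos (r : ℝ) (hr : 0 < r) :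
    0 < 216 * r ^ 12 * Real.arctan r + 168 * r ^ 10 * Real.arctan r + 216 * r ^ 11
      + 843 * r ^ 8 * Real.arctan r + 96 * r ^ 9
      + 4986 * r ^ 6 * Real.arctan r - 3061 * r ^ 7
      + 8175 * r ^ 4 * Real.arctan r - 6655 * r ^ 5
      + 5160 * r ^ 2 * Real.arctan r - 4800 * r ^ 3
      + 1080 * Real.arctan r - 1080 * r := by
  suffices g2PolyPart r < g2ArctanCoeff r * arctan r by
    unfold g2PolyPart g2ArctanCoeff at this
    linarith
  have hP : 0 < g2ArctanCoeff r := by unfold g2ArctanCoeff; positivity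
  rcases le_or_gt r 1 with hr₁ | hr₁
  · exact (g2PolyPart_lt_of_le_one hr hr₁).trans_le
      (mul_le_mul_of_nonneg_left (sum_range_arctan_series_le_arctan 4 hr.le) hP.le)
  · exact (g2PolyPart_lt_of_one_le hr₁.le).trans
      (mul_lt_mul_of_pos_left (lt_arctan_of_one_le hr₁.le) hP)
end

section
/- For all real r > 0, g₃₁(r) < 0, where g₃₁(r) = −343200r¹⁰ arctan r + 535040r⁹√(r²+1) − 1064880r⁸ arctan r − 343200r⁹ + 1400576r⁷√(r²+1) − 1214010r⁶ arctan r − 950480r⁷ + 1271712r⁵√(r²+1) − 607425r⁴ arctan r − 927690r⁵ + 461776r³√(r²+1) − 119700r² arctan r − 371091r³ + 54880r√(r²+1) − 4725 arctan r − 50155r. -/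
/-!
The half-angle substitution `r = 2u / (1 - u²)`, `u ∈ (0, 1)`, rationalises `√(r² + 1)` and
halves the arctangent, turning `(1 - u²)¹⁰ g₃₁(r)` into `2 (B(u) - 15 A(u) arctan u)` for explicit
polynomials `A = arctanCoeff > 0` and `B = algebraicPart`. The quotient `B / A - 15 arctan` vanishes
at `0`, and its derivative is `-192 u⁴ (1 - u²) K(u²) / (A² (1 + u²))`, where every coefficient of
`K = derivFactor` is positive except the leading one, which the previous coefficient absorbs on
`[0, 1]`. Hence `B < 15 A arctan` on `(0, 1)`.
-/

open Real Polynomial Set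

noncomputable def g31 (r : ℝ) : ℝ :=
  -343200 * r ^ 10 * arctan r + 535040 * r ^ 9 * √(r ^ 2 + 1) - 1064880 * r ^ 8 * arctan r
    - 343200 * r ^ 9 + 1400576 * r ^ 7 * √(r ^ 2 + 1) - 1214010 * r ^ 6 * arctan r
    - 950480 * r ^ 7 + 1271712 * r ^ 5 * √(r ^ 2 + 1) - 607425 * r ^ 4 * arctan r
    - 927690 * r ^ 5 + 461776 * r ^ 3 * √(r ^ 2 + 1) - 119700 * r ^ 2 * arctan r
    - 371091 * r ^ 3 + 54880 * r * √(r ^ 2 + 1) - 4725 * arctan r - 50155 * r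

theorem exists_two_mul_div_one_sub_sq_eq {r : ℝ} (hr : 0 < r) :
    ∃ u, 0 < u ∧ u < 1 ∧ 2 * u / (1 - u ^ 2) = r := by
  have hθ₀ : 0 < arctan r / 2 := half_pos (arctan_pos.2 hr)
  have hθ₁ : arctan r / 2 < π / 4 := by linarith [arctan_lt_pi_div_two r]
  refine ⟨tan (arctan r / 2), tan_pos_of_pos_of_lt_pi_div_two hθ₀ (by linarith [pi_pos]), ?_, ?_⟩
  · rw [← tan_pi_div_four]
    exact tan_lt_tan_of_nonneg_of_lt_pi_div_two hθ₀.le (by linarith [pi_pos]) hθ₁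
  · rw [← tan_two_mul, mul_div_cancel₀ _ two_ne_zero, tan_arctan]

theorem sqrt_two_mul_div_one_sub_sq_sq_add_one {u : ℝ} (hu₀ : -1 < u) (hu₁ : u < 1) :
    √((2 * u / (1 - u ^ 2)) ^ 2 + 1) = (1 + u ^ 2) / (1 - u ^ 2) := by
  have hu : 0 < 1 - u ^ 2 := by nlinarith
  rw [show (2 * u / (1 - u ^ 2)) ^ 2 + 1 = ((1 + u ^ 2) / (1 - u ^ 2)) ^ 2 by field_simp; ring]
  exact sqrt_sq (by positivity)

namespace G31

noncomputable def arctanCoeff : ℝ[X] :=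
  315 + 28770 * X ^ 2 + 406735 * X ^ 4 + 2148216 * X ^ 6 + 5452278 * X ^ 8 + 7356492 * X ^ 10
    + 5452278 * X ^ 12 + 2148216 * X ^ 14 + 406735 * X ^ 16 + 28770 * X ^ 18 + 315 * X ^ 20

noncomputable def algebraicPart : ℝ[X] :=
  4725 * X + 429975 * X ^ 3 + 5951400 * X ^ 5 + 30107840 * X ^ 7 + 71396730 * X ^ 9
    + 87725190 * X ^ 11 + 57256128 * X ^ 13 + 18467544 * X ^ 15 + 2495913 * X ^ 17
    + 105035 * X ^ 19

noncomputable def derivFactor : ℝ[X] :=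
  55125 + 5053125 * X + 161513800 * X ^ 2 + 2163998200 * X ^ 3 + 15172717420 * X ^ 4
    + 62104935900 * X ^ 5 + 157596820920 * X ^ 6 + 255139517352 * X ^ 7 + 263618211326 * X ^ 8
    + 168015523598 * X ^ 9 + 60090616568 * X ^ 10 + 9619955208 * X ^ 11 + 1168547436 * X ^ 12
    + 1170711612 * X ^ 13 + 474457480 * X ^ 14 + 62489560 * X ^ 15 + 1505770 * X ^ 16
    + 180075 * X ^ 16 * (1 - X)

theorem arctanCoeff_eval_pos (u : ℝ) : 0 < arctanCoeff.eval u := by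
  simp only [arctanCoeff, eval_add, eval_mul, eval_pow, eval_X, eval_ofNat]
  positivity

theorem derivFactor_eval_pos {v : ℝ} (hv₀ : 0 ≤ v) (hv₁ : v ≤ 1) : 0 < derivFactor.eval v := by
  simp only [derivFactor, eval_add, eval_sub, eval_mul, eval_pow, eval_X, eval_ofNat, eval_one]
  exact add_pos_of_pos_of_nonneg (by positivity) (mul_nonneg (by positivity) (sub_nonneg.2 hv₁))

theorem hasDerivAt_div_sub_arctan (u : ℝ) :
    HasDerivAt (fun u => algebraicPart.eval u / arctanCoeff.eval u - 15 * arctan u)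
      (-192 * u ^ 4 * (1 - u ^ 2) * derivFactor.eval (u ^ 2)
        / (arctanCoeff.eval u ^ 2 * (1 + u ^ 2))) u := by
  have hA := (arctanCoeff_eval_pos u).ne'
  refine (((algebraicPart.hasDerivAt u).div (arctanCoeff.hasDerivAt u) hA).sub
    ((hasDerivAt_arctan u).const_mul 15)).congr_deriv ?_
  field_simp
  simp only [algebraicPart, arctanCoeff, derivFactor, derivative_add, derivative_mul,
    derivative_X_pow, derivative_X, derivative_ofNat, eval_add, eval_sub, eval_mul, eval_pow,
    eval_X, eval_ofNat, eval_one, eval_C, eval_zero]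
  ring

theorem algebraicPart_eval_lt {u : ℝ} (hu₀ : 0 < u) (hu₁ : u < 1) :
    algebraicPart.eval u < 15 * arctanCoeff.eval u * arctan u := by
  have hanti : StrictAntiOn
      (fun u => algebraicPart.eval u / arctanCoeff.eval u - 15 * arctan u) (Icc 0 1) := by
    refine strictAntiOn_of_hasDerivWithinAt_neg (convex_Icc 0 1)
      (fun x _ => (hasDerivAt_div_sub_arctan x).continuousAt.continuousWithinAt)
      (fun x _ => (hasDerivAt_div_sub_arctan x).hasDerivWithinAt) ?_
    rw [interior_Icc]
    rintro x ⟨hx₀, hx₁⟩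
    have hK := derivFactor_eval_pos (sq_nonneg x) (by nlinarith)
    have hx : 0 < 1 - x ^ 2 := by nlinarith
    have hA := arctanCoeff_eval_pos x
    exact div_neg_of_neg_of_pos (by nlinarith [mul_pos (mul_pos (pow_pos hx₀ 4) hx) hK])
      (by positivity)
  have h := hanti ⟨le_rfl, zero_le_one⟩ ⟨hu₀.le, hu₁.le⟩ hu₀
  have h₀ : algebraicPart.eval 0 = 0 := by simp [algebraicPart]
  simp only [h₀, zero_div, arctan_zero, mul_zero, sub_zero] at h
  rw [sub_neg, div_lt_iff₀ (arctanCoeff_eval_pos u)] at h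
  linarith

theorem one_sub_sq_pow_mul_g31 {u : ℝ} (hu₀ : -1 < u) (hu₁ : u < 1) :
    (1 - u ^ 2) ^ 10 * g31 (2 * u / (1 - u ^ 2))
      = 2 * (algebraicPart.eval u - 15 * arctanCoeff.eval u * arctan u) := by
  have hu : 1 - u ^ 2 ≠ 0 := by nlinarith
  rw [g31, sqrt_two_mul_div_one_sub_sq_sq_add_one hu₀ hu₁, ← two_mul_arctan hu₀ hu₁]
  simp only [algebraicPart, arctanCoeff, eval_add, eval_mul, eval_pow, eval_X, eval_ofNat]
  field_simp
  ring

end G31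

/-- For all real `r > 0`, `g₃₁(r) < 0`, where `g₃₁` arises in the
analysis of the Wronskian `W[f₁, …, f₇]` via
`(d/dr)(g₃′(r)√(r²+1)/r) = −g₃₁(r)/√(r²+1)`. -/
theorem g31_neg (r : ℝ) (hr : 0 < r) :
    -343200 * r ^ 10 * Real.arctan r + 535040 * r ^ 9 * Real.sqrt (r ^ 2 + 1)
      - 1064880 * r ^ 8 * Real.arctan r - 343200 * r ^ 9
      + 1400576 * r ^ 7 * Real.sqrt (r ^ 2 + 1)
      - 1214010 * r ^ 6 * Real.arctan r - 950480 * r ^ 7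
      + 1271712 * r ^ 5 * Real.sqrt (r ^ 2 + 1)
      - 607425 * r ^ 4 * Real.arctan r - 927690 * r ^ 5
      + 461776 * r ^ 3 * Real.sqrt (r ^ 2 + 1)
      - 119700 * r ^ 2 * Real.arctan r - 371091 * r ^ 3
      + 54880 * r * Real.sqrt (r ^ 2 + 1)
      - 4725 * Real.arctan r - 50155 * r < 0 := by
  obtain ⟨u, hu₀, hu₁, rfl⟩ := exists_two_mul_div_one_sub_sq_eq hr
  have hscaled : (1 - u ^ 2) ^ 10 * g31 (2 * u / (1 - u ^ 2)) < 0 := by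
    rw [G31.one_sub_sq_pow_mul_g31 (by linarith) hu₁]
    linarith [G31.algebraicPart_eval_lt hu₀ hu₁]
  exact neg_of_mul_neg_right hscaled (pow_nonneg (by nlinarith) 10)
end
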